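/- For each m ∈ ℕ and T > 0, the set A^m_T of càdlàg functions ω: [0,T] → ℝ^d such that any two distinct jump times of ω in [0,T] are at distance at least T/m is closed in the Skorohod topology. -/

import Mathlib

open Set Filter

/-- A function `x` is càdlàg on `[0,T]`. -/
def CadlagOn {E : Type*} [NormedAddCommGroup E] (x : ℝ → E) (T : ℝ) : Prop :=
  (∀ t ∈ Set.Ico (0:ℝ) T, ContinuousWithinAt x (Set.Ici t) t) ∧
  (∀ t ∈ Set.Ioc (0:ℝ) T, ∃ l : E, Filter.Tendsto x (nhdsWithin t (Set.Ico 0 t)) (nhds l))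

/-- `x` has a jump at `t` if it fails to be left-continuous at `t`. -/
def HasJumpAt {E : Type*} [NormedAddCommGroup E] (x : ℝ → E) (t : ℝ) : Prop :=
  ¬ Filter.Tendsto x (nhdsWithin t (Set.Iio t)) (nhds (x t))

/-- The Skorohod distance between two functions on `[0,T]`. -/
noncomputable def skorohodDist {E : Type*} [NormedAddCommGroup E]
    (T : ℝ) (x y : ℝ → E) : ℝ :=
  sInf { a : ℝ | 0 ≤ a ∧ ∃ l : ℝ → ℝ, l 0 = 0 ∧ l T = T ∧
    StrictMonoOn l (Set.Icc 0 T) ∧ ContinuousOn l (Set.Icc 0 T) ∧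
    ∀ t ∈ Set.Icc (0:ℝ) T, |l t - t| ≤ a ∧ ‖x t - y (l t)‖ ≤ a }

-- boundedness of cadlag functions on [0,T]
lemma cadlag_bounded {E : Type*} [NormedAddCommGroup E] {x : ℝ → E} {T : ℝ}
    (hx : CadlagOn x T) : ∃ M, ∀ t ∈ Set.Icc (0:ℝ) T, ‖x t‖ ≤ M := by
  have hK : IsCompact (Icc (0:ℝ) T) := isCompact_Icc
  have h := hK.induction_on (p := fun s => ∃ M, ∀ t ∈ s, ‖x t‖ ≤ M)
    ⟨0, by simp⟩
    (fun s t hst ⟨M, hM⟩ => ⟨M, fun u hu => hM u (hst hu)⟩)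
    (fun s t ⟨M, hM⟩ ⟨M', hM'⟩ => ⟨max M M', fun u hu => by
      rcases hu with hu | hu
      · exact (hM u hu).trans (le_max_left _ _)
      · exact (hM' u hu).trans (le_max_right _ _)⟩)
    (fun t ht => ?_)
  · exact h
  -- local boundedness
  have hsplit : Icc (0:ℝ) T = (Icc 0 T ∩ Iio t) ∪ (Icc 0 T ∩ Ici t) := by
    ext u; simp only [mem_union, mem_inter_iff, mem_Iio, mem_Ici]
    constructor
    · intro hu; rcases lt_or_ge u t with h | h
      · exact Or.inl ⟨hu, h⟩
      · exact Or.inr ⟨hu, h⟩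
    · rintro (⟨hu, _⟩ | ⟨hu, _⟩) <;> exact hu
  -- left part bound
  have hleft : ∃ M, ∀ᶠ u in nhdsWithin t (Icc 0 T ∩ Iio t), ‖x u‖ ≤ M := by
    rcases eq_or_lt_of_le ht.1 with h0 | h0
    · refine ⟨0, ?_⟩
      have : Icc (0:ℝ) T ∩ Iio t = ∅ := by
        ext u; simp only [mem_inter_iff, mem_Iio, mem_Icc, mem_empty_iff_false, iff_false]
        rintro ⟨⟨hu0, _⟩, hut⟩; rw [← h0] at hut; linarith
      rw [this, nhdsWithin_empty]
      exact eventually_bot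
    · obtain ⟨L, hL⟩ := hx.2 t ⟨h0, ht.2⟩
      have hmono : nhdsWithin t (Icc 0 T ∩ Iio t) ≤ nhdsWithin t (Ico 0 t) :=
        nhdsWithin_mono t (fun u hu => ⟨hu.1.1, hu.2⟩)
      refine ⟨‖L‖ + 1, ?_⟩
      have : ∀ᶠ u in nhdsWithin t (Ico 0 t), ‖x u - L‖ ≤ 1 := by
        have := hL (Metric.closedBall_mem_nhds L one_pos)
        filter_upwards [this] with u hu
        simpa [dist_eq_norm] using hu
      filter_upwards [hmono this] with u hu
      calc ‖x u‖ = ‖(x u - L) + L‖ := by rw [sub_add_cancel]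
        _ ≤ ‖x u - L‖ + ‖L‖ := norm_add_le _ _
        _ ≤ ‖L‖ + 1 := by linarith
  have hright : ∃ M, ∀ᶠ u in nhdsWithin t (Icc 0 T ∩ Ici t), ‖x u‖ ≤ M := by
    rcases eq_or_lt_of_le ht.2 with hTt | hTt
    · refine ⟨‖x t‖, ?_⟩
      have hsub : Icc (0:ℝ) T ∩ Ici t ⊆ {t} := by
        rintro u ⟨⟨_, huT⟩, htu⟩
        have := mem_Ici.mp htu
        simp only [mem_singleton_iff]
        subst hTt; linarith
      have : nhdsWithin t (Icc 0 T ∩ Ici t) ≤ nhdsWithin t {t} := nhdsWithin_mono t hsub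
      have hpure : nhdsWithin t ({t} : Set ℝ) = pure t := nhdsWithin_singleton t
      refine this ?_
      rw [hpure]
      simp
    · obtain hc := hx.1 t ⟨ht.1, hTt⟩
      have hmono : nhdsWithin t (Icc 0 T ∩ Ici t) ≤ nhdsWithin t (Ici t) :=
        nhdsWithin_mono t (fun u hu => hu.2)
      refine ⟨‖x t‖ + 1, ?_⟩
      have : ∀ᶠ u in nhdsWithin t (Ici t), ‖x u - x t‖ ≤ 1 := by
        have := hc (Metric.closedBall_mem_nhds (x t) one_pos)
        filter_upwards [this] with u hu
        simpa [dist_eq_norm] using hu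
      filter_upwards [hmono this] with u hu
      calc ‖x u‖ = ‖(x u - x t) + x t‖ := by rw [sub_add_cancel]
        _ ≤ ‖x u - x t‖ + ‖x t‖ := norm_add_le _ _
        _ ≤ ‖x t‖ + 1 := by linarith
  obtain ⟨M₁, hM₁⟩ := hleft
  obtain ⟨M₂, hM₂⟩ := hright
  refine ⟨{u | ‖x u‖ ≤ max M₁ M₂}, ?_, ⟨max M₁ M₂, fun u hu => hu⟩⟩
  have : nhdsWithin t (Icc 0 T) =
      nhdsWithin t (Icc 0 T ∩ Iio t) ⊔ nhdsWithin t (Icc 0 T ∩ Ici t) := by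
    rw [← nhdsWithin_union, ← hsplit]
  rw [this, mem_sup]
  constructor
  · filter_upwards [hM₁] with u hu; exact hu.trans (le_max_left _ _)
  · filter_upwards [hM₂] with u hu; exact hu.trans (le_max_right _ _)

/-- Transfer of a jump of the limit to a jump of a nearby path. -/
lemma exists_jump_near {E : Type*} [NormedAddCommGroup E]
    {T : ℝ} (hT : 0 < T) {x : ℝ → E} (hx : CadlagOn x T)
    {s : ℝ} (hs : s ∈ Set.Ioc (0:ℝ) T) (hjx : HasJumpAt x s) :
    ∃ ε > 0, ∀ (y : ℝ → E), CadlagOn y T → ∀ a : ℝ, 0 ≤ a → a < ε →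
      ∀ l : ℝ → ℝ, l 0 = 0 → l T = T → StrictMonoOn l (Set.Icc 0 T) →
        ContinuousOn l (Set.Icc 0 T) →
        (∀ u ∈ Set.Icc (0:ℝ) T, |l u - u| ≤ a ∧ ‖y u - x (l u)‖ ≤ a) →
        ∃ s' ∈ Set.Ioc (0:ℝ) T, |s' - s| ≤ a ∧ HasJumpAt y s' := by
  -- left limit of x at s
  obtain ⟨L, hL⟩ := hx.2 s hs
  rw [nhdsWithin_Ico_eq_nhdsLT hs.1] at hL
  have hLne : L ≠ x s := fun h => hjx (h ▸ hL)
  set c := ‖x s - L‖ with hc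
  have hcpos : 0 < c := by
    rw [hc, norm_pos_iff]
    exact sub_ne_zero.mpr (Ne.symm hLne)
  -- δ such that on (s-δ, s), x is within c/4 of L
  have hmem : {v : ℝ | ‖x v - L‖ ≤ c / 4} ∈ nhdsWithin s (Set.Iio s) := by
    have := hL (Metric.closedBall_mem_nhds L (by positivity : (0:ℝ) < c / 4))
    filter_upwards [this] with v hv
    simpa [dist_eq_norm] using hv
  obtain ⟨u₀, hu₀s, hu₀⟩ := mem_nhdsLT_iff_exists_Ioo_subset.mp hmem
  set δ := s - u₀ with hδ
  have hδpos : 0 < δ := by simp [hδ]; exact hu₀s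
  refine ⟨min (δ / 3) (c / 4), lt_min (by positivity) (by positivity), ?_⟩
  intro y hy a ha0 haε l hl0 hlT hlmono hlcont hlbd
  have haδ : a < δ / 3 := lt_of_lt_of_le haε (min_le_left _ _)
  have hac : a < c / 4 := lt_of_lt_of_le haε (min_le_right _ _)
  -- find s' with l s' = s by IVT
  have hIVT : Set.Icc (l 0) (l T) ⊆ l '' Set.Icc 0 T :=
    intermediate_value_Icc hT.le hlcont
  obtain ⟨s', hs'mem, hls'⟩ := hIVT (by rw [hl0, hlT]; exact ⟨hs.1.le, hs.2⟩)
  have hs'pos : 0 < s' := by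
    rcases eq_or_lt_of_le hs'mem.1 with h | h
    · exfalso; rw [← h, hl0] at hls'; exact absurd hls'.symm (ne_of_gt hs.1)
    · exact h
  have hs'Ioc : s' ∈ Set.Ioc (0:ℝ) T := ⟨hs'pos, hs'mem.2⟩
  have hs'near : |s' - s| ≤ a := by
    have := (hlbd s' hs'mem).1
    rw [hls'] at this
    rw [abs_sub_comm]; exact this
  refine ⟨s', hs'Ioc, hs'near, ?_⟩
  -- left limit of y at s'
  obtain ⟨L', hL'⟩ := hy.2 s' hs'Ioc
  rw [nhdsWithin_Ico_eq_nhdsLT hs'pos] at hL'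
  -- on a left neighborhood of s', y is close to L
  have hnear : ∀ᶠ u in nhdsWithin s' (Set.Iio s'), ‖y u - L‖ ≤ a + c / 4 := by
    have hb : max (s' - δ/3) 0 < s' := by
      rcases le_total (s' - δ/3) 0 with h | h
      · rw [max_eq_right h]; exact hs'pos
      · rw [max_eq_left h]; linarith
    have hIoo : Set.Ioo (max (s' - δ/3) 0) s' ∈ nhdsWithin s' (Set.Iio s') :=
      (mem_nhdsLT_iff_exists_Ioo_subset' hb).mpr ⟨_, hb, subset_rfl⟩
    filter_upwards [hIoo] with u hu
    have hu0 : 0 ≤ u := le_of_lt (lt_of_le_of_lt (le_max_right _ _) hu.1)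
    have huT : u ≤ T := le_trans hu.2.le hs'mem.2
    have huIcc : u ∈ Set.Icc (0:ℝ) T := ⟨hu0, huT⟩
    have hlu_lt : l u < s := by
      rw [← hls']
      exact hlmono huIcc hs'mem hu.2
    have hlu_gt : u₀ < l u := by
      have h1 : |l u - u| ≤ a := (hlbd u huIcc).1
      have h2 : u - a ≤ l u := by
        have := abs_le.mp h1
        linarith [this.1]
      have h3 : s' - δ/3 < u := lt_of_le_of_lt (le_max_left _ _) hu.1
      have h4 : s - a ≤ s' := by
        have := abs_le.mp hs'near
        linarith [this.1]
      have : s - δ < l u := by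
        calc s - δ < s - 2*a - δ/3 := by linarith
          _ ≤ s' - a - δ/3 := by linarith
          _ < u - a := by linarith
          _ ≤ l u := h2
      simpa [hδ] using by linarith
    have hxlu : ‖x (l u) - L‖ ≤ c / 4 := hu₀ ⟨hlu_gt, hlu_lt⟩
    have hyu : ‖y u - x (l u)‖ ≤ a := (hlbd u huIcc).2
    calc ‖y u - L‖ = ‖(y u - x (l u)) + (x (l u) - L)‖ := by rw [sub_add_sub_cancel]
      _ ≤ ‖y u - x (l u)‖ + ‖x (l u) - L‖ := norm_add_le _ _
      _ ≤ a + c / 4 := add_le_add hyu hxlu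
  -- hence the left limit L' of y at s' is close to L
  have hL'L : ‖L' - L‖ ≤ a + c / 4 := by
    have htend : Filter.Tendsto (fun u => ‖y u - L‖) (nhdsWithin s' (Set.Iio s'))
        (nhds ‖L' - L‖) := ((hL'.sub tendsto_const_nhds).norm)
    exact le_of_tendsto htend hnear
  -- and y s' is close to x s
  have hys' : ‖y s' - x s‖ ≤ a := by
    have := (hlbd s' hs'mem).2
    rwa [hls'] at this
  -- so y s' ≠ L'
  have hne : y s' ≠ L' := by
    intro h
    have h1 : c ≤ ‖x s - y s'‖ + ‖y s' - L‖ := by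
      calc c = ‖(x s - y s') + (y s' - L)‖ := by rw [hc, sub_add_sub_cancel]
        _ ≤ _ := norm_add_le _ _
    rw [norm_sub_rev] at h1
    have h3 : ‖y s' - L‖ ≤ a + c / 4 := by rw [h]; exact hL'L
    linarith
  -- conclude
  intro htend
  exact hne (tendsto_nhds_unique htend hL')

lemma skorohodSet_nonempty {E : Type*} [NormedAddCommGroup E]
    {T : ℝ} {x y : ℝ → E} (hx : CadlagOn x T) (hy : CadlagOn y T) :
    { a : ℝ | 0 ≤ a ∧ ∃ l : ℝ → ℝ, l 0 = 0 ∧ l T = T ∧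
      StrictMonoOn l (Set.Icc 0 T) ∧ ContinuousOn l (Set.Icc 0 T) ∧
      ∀ t ∈ Set.Icc (0:ℝ) T, |l t - t| ≤ a ∧ ‖x t - y (l t)‖ ≤ a }.Nonempty := by
  obtain ⟨M₁, hM₁⟩ := cadlag_bounded hx
  obtain ⟨M₂, hM₂⟩ := cadlag_bounded hy
  refine ⟨max (M₁ + M₂) 0, le_max_right _ _, id, rfl, rfl,
    fun u _ v _ huv => huv, continuousOn_id, fun t ht => ⟨?_, ?_⟩⟩
  · simp only [id_eq, sub_self, abs_zero]; exact le_max_right _ _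
  · calc ‖x t - y (id t)‖ ≤ ‖x t‖ + ‖y t‖ := norm_sub_le _ _
      _ ≤ M₁ + M₂ := add_le_add (hM₁ t ht) (hM₂ t ht)
      _ ≤ _ := le_max_left _ _

/-- The set `A^m_T` of càdlàg paths whose distinct jump times in `[0,T]` are separated by at
least `T/m` is (sequentially) closed in the Skorohod topology. -/
theorem jump_separated_set_closed {d : ℕ}
    (T : ℝ) (hT : 0 < T) (m : ℕ) (hm : 0 < m)
    (x : ℝ → EuclideanSpace ℝ (Fin d)) (hx : CadlagOn x T)
    (xk : ℕ → ℝ → EuclideanSpace ℝ (Fin d)) (hxk : ∀ k, CadlagOn (xk k) T)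
    (hconv : Tendsto (fun k => skorohodDist T (xk k) x) atTop (nhds 0))
    -- each xk belongs to A^m_T
    (hsep : ∀ k, ∀ s ∈ Set.Ioc (0:ℝ) T, ∀ t ∈ Set.Ioc (0:ℝ) T, s ≠ t →
      HasJumpAt (xk k) s → HasJumpAt (xk k) t → T / m ≤ |t - s|) :
    -- then the limit x belongs to A^m_T
    ∀ s ∈ Set.Ioc (0:ℝ) T, ∀ t ∈ Set.Ioc (0:ℝ) T, s ≠ t →
      HasJumpAt x s → HasJumpAt x t → T / m ≤ |t - s| := by
  intro s hsmem t htmem hst hjs hjt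
  obtain ⟨εs, hεs, hs_transfer⟩ := exists_jump_near hT hx hsmem hjs
  obtain ⟨εt, hεt, ht_transfer⟩ := exists_jump_near hT hx htmem hjt
  have hstpos : 0 < |t - s| := abs_pos.mpr (sub_ne_zero.mpr (Ne.symm hst))
  refine le_of_forall_pos_le_add fun η hη => ?_
  set ε₀ := min (min εs εt) (min (|t - s| / 4) (η / 2)) with hε₀
  have hε₀pos : 0 < ε₀ := by
    refine lt_min (lt_min hεs hεt) (lt_min (by positivity) (by positivity))
  -- find k with skorohodDist < ε₀
  have hev : ∀ᶠ k in atTop, skorohodDist T (xk k) x < ε₀ :=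
    hconv.eventually_lt_const hε₀pos
  obtain ⟨k, hk⟩ := hev.exists
  -- extract an element a < ε₀ of the defining set
  set S := { a : ℝ | 0 ≤ a ∧ ∃ l : ℝ → ℝ, l 0 = 0 ∧ l T = T ∧
    StrictMonoOn l (Set.Icc 0 T) ∧ ContinuousOn l (Set.Icc 0 T) ∧
    ∀ u ∈ Set.Icc (0:ℝ) T, |l u - u| ≤ a ∧ ‖xk k u - x (l u)‖ ≤ a } with hS
  have hSne : S.Nonempty := skorohodSet_nonempty (hxk k) hx
  have hSbdd : BddBelow S := ⟨0, fun a ha => ha.1⟩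
  have hlt : sInf S < ε₀ := hk
  obtain ⟨a, haS, haε₀⟩ := (csInf_lt_iff hSbdd hSne).mp hlt
  obtain ⟨ha0, l, hl0, hlT, hlmono, hlcont, hlbd⟩ := haS
  have haεs : a < εs := lt_of_lt_of_le haε₀ (le_trans (min_le_left _ _) (min_le_left _ _))
  have haεt : a < εt := lt_of_lt_of_le haε₀ (le_trans (min_le_left _ _) (min_le_right _ _))
  have hats : a < |t - s| / 4 :=
    lt_of_lt_of_le haε₀ (le_trans (min_le_right _ _) (min_le_left _ _))
  have haη : a < η / 2 :=
    lt_of_lt_of_le haε₀ (le_trans (min_le_right _ _) (min_le_right _ _))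
  obtain ⟨s', hs'Ioc, hs'near, hjs'⟩ :=
    hs_transfer (xk k) (hxk k) a ha0 haεs l hl0 hlT hlmono hlcont hlbd
  obtain ⟨t', ht'Ioc, ht'near, hjt'⟩ :=
    ht_transfer (xk k) (hxk k) a ha0 haεt l hl0 hlT hlmono hlcont hlbd
  have hne : s' ≠ t' := by
    intro h
    subst h
    have h1 := abs_le.mp hs'near
    have h2 := abs_le.mp ht'near
    have : |t - s| ≤ 2 * a := by
      rw [abs_le]; constructor <;> linarith
    linarith
  have hbound := hsep k s' hs'Ioc t' ht'Ioc hne hjs' hjt'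
  have h1 := abs_le.mp hs'near
  have h2 := abs_le.mp ht'near
  have h3 : |t' - s'| ≤ |t - s| + 2 * a := by
    have hss : |s - s'| ≤ a := by rw [abs_sub_comm]; exact hs'near
    calc |t' - s'| = |(t' - t) + (t - s) + (s - s')| := by ring_nf
      _ ≤ |(t' - t) + (t - s)| + |s - s'| := abs_add_le _ _
      _ ≤ |t' - t| + |t - s| + |s - s'| := by linarith [abs_add_le (t' - t) (t - s)]
      _ ≤ |t - s| + 2 * a := by linarith [ht'near]
  calc T / m ≤ |t' - s'| := hbound
    _ ≤ |t - s| + 2 * a := h3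
    _ ≤ |t - s| + η := by linarith
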